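/- arXiv:2602.18621 — 3 statements merged into one kernel-verified Lean document; each statement's English description precedes it below -/
import Mathlib

section
/- Let p ≥ 1 and s1, s2 ≥ 1 be integers, and let L̄ be the reduced Laplacian of Cone(T(p,s1,s2)) with respect to the cone vertex, a square integer matrix indexed by the p+s1+s2 vertices of T(p,s1,s2). Then for every i with 3 ≤ i ≤ p, the integer vector e_{π_2} − F_{2i−4}·e_{π_{i−1}} + F_{2i−6}·e_{π_i} lies in the ℤ-span of the columns of L̄ (equivalently, in the quotient ℤ^{V(T)}/im(L̄) one has [e_{π_2}] = F_{2i−4}·[e_{π_{i−1}}] − F_{2i−6}·[e_{π_i}]). -/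
/-- The cone over a graph: add a new vertex `none` adjacent to everything. -/
def coneGraph {V : Type*} (G : SimpleGraph V) : SimpleGraph (Option V) :=
  SimpleGraph.fromRel (fun u v =>
    u = none ∨ ∃ a b, u = some a ∧ v = some b ∧ G.Adj a b)


/-- The bi-coconut tree `T(p,s1,s2)`: vertices `0,…,p-1` form a path (`π_i` is
vertex `i-1`), vertices `p,…,p+s1-1` are leaves attached to `π_1 = 0`, and
vertices `p+s1,…,p+s1+s2-1` are leaves attached to `π_p = p-1`. -/
def biCoconut (p s1 s2 : ℕ) : SimpleGraph (Fin (p + s1 + s2)) :=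
  SimpleGraph.fromRel (fun u v =>
    ((u : ℕ) + 1 = (v : ℕ) ∧ (v : ℕ) < p) ∨
    ((u : ℕ) = 0 ∧ p ≤ (v : ℕ) ∧ (v : ℕ) < p + s1) ∨
    ((u : ℕ) = p - 1 ∧ p + s1 ≤ (v : ℕ)))


open scoped Classical in
/-- The reduced Laplacian of the cone over `G`, with respect to the cone vertex:
the Laplacian matrix `D - A` of `coneGraph G` with the row and column of the
cone vertex deleted. -/
noncomputable def reducedLap {V : Type*} [Fintype V] (G : SimpleGraph V) :
    Matrix V V ℤ :=
  ((coneGraph G).lapMatrix ℤ).submatrix some some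

/-! Because every vertex is joined to the cone vertex, `L̄ = L(T) + 1`, so the column of `L̄` at
an inner path vertex `π_j` is `3 e_{π_j} - e_{π_{j-1}} - e_{π_{j+1}}`. Subtracting `F_{2i-4}` times
the column at `π_i` turns the relation for `i` into the one for `i + 1`, since
`F_{2i-2} + F_{2i-6} = 3 F_{2i-4}`; for `i = 3` the vector is `0`. -/

open Matrix

section Cone

variable {V : Type*} (G : SimpleGraph V)

@[simp]
theorem coneGraph_adj_some_some {u v : V} : (coneGraph G).Adj (some u) (some v) ↔ G.Adj u v := by
  simpa [coneGraph, G.adj_comm v u] using G.ne_of_adj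

@[simp]
theorem coneGraph_adj_some_none (u : V) : (coneGraph G).Adj (some u) none := by
  simp [coneGraph]

variable [Fintype V] [DecidableEq V] [DecidableRel G.Adj]

theorem coneGraph_neighborFinset_some [DecidableRel (coneGraph G).Adj] (v : V) :
    (coneGraph G).neighborFinset (some v) = insert none ((G.neighborFinset v).map .some) := by
  ext (_ | w) <;> simp

theorem coneGraph_degree_some [DecidableRel (coneGraph G).Adj] (v : V) :
    (coneGraph G).degree (some v) = G.degree v + 1 := by
  rw [← SimpleGraph.card_neighborFinset_eq_degree, coneGraph_neighborFinset_some,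
    Finset.card_insert_of_notMem (by simp), Finset.card_map,
    SimpleGraph.card_neighborFinset_eq_degree]

theorem reducedLap_eq_lapMatrix_add_one : reducedLap G = G.lapMatrix ℤ + 1 := by
  classical
  ext u v
  by_cases h : u = v
  · subst h
    simp [reducedLap, SimpleGraph.lapMatrix, SimpleGraph.degMatrix, coneGraph_degree_some]
  · simp [reducedLap, SimpleGraph.lapMatrix, SimpleGraph.degMatrix, h]

theorem SimpleGraph.lapMatrix_mulVec_single {R : Type*} [Ring R] (w : V) :
    G.lapMatrix R *ᵥ Pi.single w 1 =
      (G.degree w : R) • Pi.single w 1 - ∑ u ∈ G.neighborFinset w, Pi.single u 1 := by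
  ext v
  rw [lapMatrix_mulVec_apply]
  by_cases h : v = w
  · subst h
    simp
  · simp [Pi.single_apply, h, Finset.sum_apply, G.adj_comm]

end Cone

theorem Nat.fib_add_four_add_fib (n : ℕ) : Nat.fib (n + 4) + Nat.fib n = 3 * Nat.fib (n + 2) := by
  rw [Nat.fib_add_two (n := n + 2), Nat.fib_add_two (n := n + 1), Nat.fib_add_two (n := n)]
  ring

theorem Submodule.sub_fib_smul_add_fib_smul_mem {R M : Type*} [CommRing R] [AddCommGroup M]
    [Module R M] {S : Submodule R M} {f : ℕ → M} {n : ℕ}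
    (hf : ∀ k < n, f k - (3 : R) • f (k + 1) + f (k + 2) ∈ S) :
    f 0 - (Nat.fib (2 * n + 2) : R) • f n + (Nat.fib (2 * n) : R) • f (n + 1) ∈ S := by
  induction n with
  | zero => simp
  | succ n ih =>
    have hfib : (Nat.fib (2 * (n + 1) + 2) : R) =
        3 * Nat.fib (2 * n + 2) - Nat.fib (2 * n) := by
      rw [eq_sub_iff_add_eq, show 2 * (n + 1) + 2 = 2 * n + 4 by ring]
      exact_mod_cast congrArg (Nat.cast : ℕ → R) (Nat.fib_add_four_add_fib (2 * n))
    convert S.add_mem (ih fun k hk => hf k (by omega))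
      (S.smul_mem (Nat.fib (2 * n + 2) : R) (hf n n.lt_succ_self)) using 1
    rw [hfib, show 2 * (n + 1) = 2 * n + 2 by ring]
    module

open scoped Classical in
theorem biCoconut_neighborFinset_of_add_two_lt {p s1 s2 j : ℕ} (hj : j + 2 < p) :
    (biCoconut p s1 s2).neighborFinset ⟨j + 1, by omega⟩ = {⟨j, by omega⟩, ⟨j + 2, by omega⟩} := by
  ext w
  rw [SimpleGraph.mem_neighborFinset]
  simp only [biCoconut, SimpleGraph.fromRel_adj, Finset.mem_insert, Finset.mem_singleton, ne_eq,
    Fin.ext_iff]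
  omega

theorem reducedLap_biCoconut_mulVec_single {p s1 s2 j : ℕ} (hj : j + 2 < p) :
    reducedLap (biCoconut p s1 s2) *ᵥ Pi.single ⟨j + 1, by omega⟩ 1 =
      (3 : ℤ) • Pi.single ⟨j + 1, by omega⟩ 1 - Pi.single ⟨j, by omega⟩ 1
        - Pi.single ⟨j + 2, by omega⟩ 1 := by
  classical
  have hnbr := biCoconut_neighborFinset_of_add_two_lt (s1 := s1) (s2 := s2) hj
  have hdeg : (biCoconut p s1 s2).degree ⟨j + 1, by omega⟩ = 2 := by
    rw [← SimpleGraph.card_neighborFinset_eq_degree, hnbr, Finset.card_pair (by simp)]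
  rw [reducedLap_eq_lapMatrix_add_one, add_mulVec, one_mulVec,
    SimpleGraph.lapMatrix_mulVec_single, hnbr, Finset.sum_pair (by simp), hdeg]
  module

/-- Let `p ≥ 1`, `s1, s2 ≥ 1`, and let `L̄` be the reduced
Laplacian of `Cone(T(p,s1,s2))` with respect to the cone vertex. For every
`3 ≤ i ≤ p`, the vector `e_{π_2} - F_{2i-4}·e_{π_{i-1}} + F_{2i-6}·e_{π_i}`
lies in the ℤ-span of the columns of `L̄` (the range of `v ↦ L̄ *ᵥ v`). -/
theorem relation_pi_two (p s1 s2 : ℕ) (i : ℕ) (hi : 3 ≤ i) (hip : i ≤ p) :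
    (Pi.single (⟨1, by omega⟩ : Fin (p + s1 + s2)) (1 : ℤ)
        - (Nat.fib (2 * i - 4) : ℤ) •
            Pi.single (⟨i - 2, by omega⟩ : Fin (p + s1 + s2)) (1 : ℤ)
        + (Nat.fib (2 * i - 6) : ℤ) •
            Pi.single (⟨i - 1, by omega⟩ : Fin (p + s1 + s2)) (1 : ℤ)) ∈
      LinearMap.range (reducedLap (biCoconut p s1 s2)).mulVecLin := by
  obtain ⟨n, rfl⟩ : ∃ n, i = n + 3 := ⟨i - 3, by omega⟩
  -- `e k = e_{π_{k+2}}`, extended by `0` so that it is defined for every `k`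
  let e (k : ℕ) : Fin (p + s1 + s2) → ℤ :=
    if hk : k + 1 < p + s1 + s2 then Pi.single ⟨k + 1, hk⟩ 1 else 0
  have he (k : ℕ) (hk : k + 1 < p + s1 + s2) : e k = Pi.single ⟨k + 1, hk⟩ 1 := dif_pos hk
  have key : e 0 - (Nat.fib (2 * n + 2) : ℤ) • e n + (Nat.fib (2 * n) : ℤ) • e (n + 1) ∈
      LinearMap.range (reducedLap (biCoconut p s1 s2)).mulVecLin := by
    refine Submodule.sub_fib_smul_add_fib_smul_mem fun k hk => ?_
    rw [he k (by omega), he (k + 1) (by omega), he (k + 2) (by omega)]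
    convert Submodule.neg_mem _ (LinearMap.mem_range_self _
      (Pi.single ⟨k + 1 + 1, by omega⟩ 1 : Fin (p + s1 + s2) → ℤ)) using 1
    rw [mulVecLin_apply, reducedLap_biCoconut_mulVec_single (j := k + 1) (by omega)]
    simp only [add_assoc, Nat.reduceAdd]
    module
  rw [he 0 (by omega), he n (by omega), he (n + 1) (by omega)] at key
  rw [show 2 * (n + 3) - 4 = 2 * n + 2 by omega, show 2 * (n + 3) - 6 = 2 * n by omega]
  convert key using 4 <;> rfl
end

section
/- For all integers p ≥ 3 and s1, s2 ≥ 1, the following identity holds: 2·b^{(s1)}_{2p−3} + s2·b^{(s1)}_{2p−4} = 2^{s1−1}·( (4·s1 + 4·s2 + s1·s2 + 16)·F_{2p−2} − (2·s1 + 2·s2 + 16)·F_{2p−4} + 4·F_{2p−6} ). -/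
/-- Shifted sequence `bSeq s1 n = b^{(s1)}_{n-2}`. -/
def bSeq (s1 : ℕ) : ℕ → ℤ
  | 0 => 2 ^ s1
  | 1 => if s1 = 0 then 1 else 2 ^ (s1 - 1) * (s1 + 2)
  | n + 2 => bSeq s1 (n + 1) + bSeq s1 n

lemma bSeq_closed (s1 : ℕ) (hs1 : 1 ≤ s1) (n : ℕ) :
    bSeq s1 n = 2 ^ (s1 - 1) * (2 * (Nat.fib (n + 1) : ℤ) + s1 * Nat.fib n) := by
  obtain ⟨t, rfl⟩ : ∃ t, s1 = t + 1 := ⟨s1 - 1, by omega⟩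
  induction n using Nat.twoStepInduction with
  | zero => simp [bSeq, pow_succ]
  | one => simp [bSeq]; push_cast; ring
  | more n ih1 ih2 =>
    show bSeq (t + 1) (n + 1) + bSeq (t + 1) n = _
    rw [ih1, ih2, show n + 2 + 1 = n + 1 + 2 from rfl, Nat.fib_add_two (n := n + 1),
      Nat.fib_add_two (n := n)]
    push_cast
    ring

/-- For all integers `p ≥ 3` and `s1, s2 ≥ 1`:
`2 b^{(s1)}_{2p-3} + s2 b^{(s1)}_{2p-4}
  = 2^{s1-1} ((4s1+4s2+s1·s2+16) F_{2p-2} - (2s1+2s2+16) F_{2p-4} + 4 F_{2p-6})`. -/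
theorem bSeq_fib_identity (p s1 s2 : ℕ) (hp : 3 ≤ p) (hs1 : 1 ≤ s1) (hs2 : 1 ≤ s2) :
    2 * bSeq s1 (2 * p - 1) + (s2 : ℤ) * bSeq s1 (2 * p - 2) =
      2 ^ (s1 - 1) *
        ((4 * (s1 : ℤ) + 4 * s2 + (s1 : ℤ) * s2 + 16) * Nat.fib (2 * p - 2)
          - (2 * (s1 : ℤ) + 2 * s2 + 16) * Nat.fib (2 * p - 4)
          + 4 * Nat.fib (2 * p - 6)) := by
  obtain ⟨q, rfl⟩ : ∃ q, p = q + 3 := ⟨p - 3, by omega⟩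
  rw [show 2 * (q + 3) - 1 = 2 * q + 5 from by omega,
    show 2 * (q + 3) - 2 = 2 * q + 4 from by omega,
    show 2 * (q + 3) - 4 = 2 * q + 2 from by omega,
    show 2 * (q + 3) - 6 = 2 * q from by omega,
    bSeq_closed s1 hs1, bSeq_closed s1 hs1,
    show 2 * q + 5 + 1 = 2 * q + 6 from by omega,
    show 2 * q + 4 + 1 = 2 * q + 5 from by omega]
  have e : ∀ a b c : ℕ, a = b + 2 → c = b + 1 →
      (Nat.fib a : ℤ) = Nat.fib c + Nat.fib b := by
    rintro a b c rfl rfl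
    rw [Nat.fib_add_two]; push_cast; ring
  rw [e (2*q+6) (2*q+4) (2*q+5) (by omega) (by omega),
    e (2*q+5) (2*q+3) (2*q+4) (by omega) (by omega),
    e (2*q+4) (2*q+2) (2*q+3) (by omega) (by omega),
    e (2*q+3) (2*q+1) (2*q+2) (by omega) (by omega),
    e (2*q+2) (2*q) (2*q+1) (by omega) (by omega)]
  ring
end

section
/- For all integers s1 ≥ 1, s2 ≥ 1 and p ≥ 1, the following identity holds: 2·b^{(s1)}_{2p−3} + s2·b^{(s1)}_{2p−4} = 2·(2·b^{(s1−1)}_{2p−3} + s2·b^{(s1−1)}_{2p−4}) + 2^{s1−1}·(2·F_{2p} + (s2 − 2)·F_{2p−2}). -/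
lemma bSeq_succ_s1 (s1 : ℕ) (hs1 : 1 ≤ s1) :
    ∀ n, bSeq s1 n = 2 * bSeq (s1 - 1) n + 2 ^ (s1 - 1) * (Nat.fib n : ℤ) := by
  have key : ∀ n, bSeq s1 n = 2 * bSeq (s1 - 1) n + 2 ^ (s1 - 1) * (Nat.fib n : ℤ) ∧
      bSeq s1 (n + 1) = 2 * bSeq (s1 - 1) (n + 1) + 2 ^ (s1 - 1) * (Nat.fib (n + 1) : ℤ) := by
    intro n
    induction n with
    | zero =>
      constructor
      · simp [bSeq]
        obtain ⟨t, rfl⟩ := Nat.exists_eq_add_of_le hs1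
        simp [pow_succ]
        ring
      · obtain ⟨t, rfl⟩ := Nat.exists_eq_add_of_le hs1
        rcases Nat.eq_zero_or_pos t with rfl | ht
        · simp [bSeq]
        · obtain ⟨u, rfl⟩ := Nat.exists_eq_add_of_le ht
          simp [bSeq, Nat.add_sub_cancel]
          push_cast
          ring_nf
    | succ k ih =>
      refine ⟨ih.2, ?_⟩
      show bSeq s1 (k + 2) = _
      rw [bSeq, ih.1, ih.2, Nat.fib_add_two, bSeq]
      push_cast
      ring
  exact fun n => (key n).1

/-- For all integers `s1, s2 ≥ 1` and `p ≥ 1`: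
`2 b^{(s1)}_{2p-3} + s2 b^{(s1)}_{2p-4}
  = 2 (2 b^{(s1-1)}_{2p-3} + s2 b^{(s1-1)}_{2p-4}) + 2^{s1-1} (2 F_{2p} + (s2-2) F_{2p-2})`. -/
theorem bSeq_combination_succ_s1 (s1 s2 p : ℕ)
    (hs1 : 1 ≤ s1) (hs2 : 1 ≤ s2) (hp : 1 ≤ p) :
    2 * bSeq s1 (2 * p - 1) + (s2 : ℤ) * bSeq s1 (2 * p - 2) =
      2 * (2 * bSeq (s1 - 1) (2 * p - 1) + (s2 : ℤ) * bSeq (s1 - 1) (2 * p - 2)) +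
        2 ^ (s1 - 1) *
          (2 * (Nat.fib (2 * p) : ℤ) + ((s2 : ℤ) - 2) * (Nat.fib (2 * p - 2) : ℤ)) := by
  obtain ⟨q, rfl⟩ := Nat.exists_eq_add_of_le hp
  rw [bSeq_succ_s1 s1 hs1, bSeq_succ_s1 s1 hs1]
  have h1 : 2 * (1 + q) - 1 = 2 * q + 1 := by omega
  have h2 : 2 * (1 + q) - 2 = 2 * q := by omega
  have h3 : 2 * (1 + q) = 2 * q + 2 := by omega
  rw [h1, h2, h3, Nat.fib_add_two]
  push_cast
  ring
end
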